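/- arXiv:2510.22654 — 5 statements merged into one kernel-verified Lean document; each statement's English description precedes it below -/
import Mathlib

section
/- Let K, M, T be positive integers with M ≤ K. For each round t ∈ {1,…,T} and each index k ∈ {1,…,K}, let UCB(t,k) and LCB(t,k) be real numbers, and let L*(k) be real numbers satisfying LCB(t,k) ≤ L*(k) ≤ UCB(t,k) for all t and k. Let k* be a minimizer of L*(k) over k ∈ {1,…,K} and set L⋆ = L*(k*). Suppose for each t a subset S_t ⊆ {1,…,K} with |S_t| = M is chosen that minimizes Σ_{k∈S} LCB(t,k) over all subsets S of size M, and an index i_t ∈ S_t is chosen that minimizes UCB(t,k) over k ∈ S_t. If v_1,…,v_T are real numbers with v_t ≤ UCB(t,i_t) for every t, then Σ_{t=1}^T (v_t − L⋆) ≤ Σ_{t : k*∈S_t} [UCB(t,k*) − LCB(t,k*)] + (1/M) Σ_{t=1}^T Σ_{k∈S_t} [UCB(t,k) − LCB(t,k)]. -/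
/-!
On the confidence event, `LCB t k⋆ ≤ L⋆` and the played loss is at most `UCB t k` for every
`k ∈ S_t`. If `k⋆ ∈ S_t`, the round costs at most the width of `k⋆`. Otherwise exchanging any
`j ∈ S_t` for `k⋆` cannot lower the sum of lower bounds, so `LCB t j ≤ LCB t k⋆ ≤ L⋆`; then the
round costs at most the width of every `j ∈ S_t`, hence at most their average.
-/

open Finset
open scoped BigOperators

namespace Finset

variable {α β : Type*} [DecidableEq α]

lemma apply_le_of_sum_minimal_of_notMem [AddCommGroup β] [PartialOrder β] [IsOrderedAddMonoid β]
    {s : Finset α} {f : α → β}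
    (hmin : ∀ s' : Finset α, s'.card = s.card → ∑ k ∈ s, f k ≤ ∑ k ∈ s', f k)
    {a j : α} (ha : a ∉ s) (hj : j ∈ s) : f j ≤ f a := by
  have ha' : a ∉ s.erase j := fun h => ha (mem_of_mem_erase h)
  have hcard : (insert a (s.erase j)).card = s.card := by
    rw [card_insert_of_notMem ha', card_erase_add_one hj]
  have h := hmin _ hcard
  rwa [sum_insert ha', sum_erase_eq_sub hj, add_sub_left_comm, le_add_iff_nonneg_right,
    sub_nonneg] at h

end Finset

section ConfidenceBounds

variable {α : Type*} [DecidableEq α] {s : Finset α} {ucb lcb : α → ℝ} {i : α} {v : ℝ}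

lemma sub_le_expect_width_of_notMem {a : α} {c : ℝ} (hlcb : lcb a ≤ c)
    (hmin : ∀ s' : Finset α, s'.card = s.card → ∑ k ∈ s, lcb k ≤ ∑ k ∈ s', lcb k)
    (ha : a ∉ s) (hi : i ∈ s) (himin : ∀ k ∈ s, ucb i ≤ ucb k) (hv : v ≤ ucb i) :
    v - c ≤ 𝔼 k ∈ s, (ucb k - lcb k) :=
  le_expect ⟨i, hi⟩ fun k hk => by
    linarith [himin k hk, apply_le_of_sum_minimal_of_notMem hmin ha hk]

lemma sub_le_ite_width_add_expect_width {a : α} {c : ℝ} (hlcb : lcb a ≤ c) (hwidth : ∀ k ∈ s, lcb k ≤ ucb k)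
    (hmin : ∀ s' : Finset α, s'.card = s.card → ∑ k ∈ s, lcb k ≤ ∑ k ∈ s', lcb k)
    (hi : i ∈ s) (himin : ∀ k ∈ s, ucb i ≤ ucb k) (hv : v ≤ ucb i) :
    v - c ≤ (if a ∈ s then ucb a - lcb a else 0) + 𝔼 k ∈ s, (ucb k - lcb k) := by
  have hexp : 0 ≤ 𝔼 k ∈ s, (ucb k - lcb k) :=
    expect_nonneg fun k hk => sub_nonneg.2 (hwidth k hk)
  split_ifs with ha
  · linarith [himin a ha]
  · linarith [sub_le_expect_width_of_notMem hlcb hmin ha hi himin hv]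

end ConfidenceBounds

theorem mlcb_pseudo_regret_core_general
    (K M T : ℕ)
    (UCB LCB : Fin T → Fin K → ℝ) (Lstar : Fin K → ℝ)
    (hbracket : ∀ t k, LCB t k ≤ Lstar k ∧ Lstar k ≤ UCB t k)
    (kstar : Fin K)
    (S : Fin T → Finset (Fin K))
    (hScard : ∀ t, (S t).card = M)
    (hSmin : ∀ t, ∀ S' : Finset (Fin K), S'.card = M →
      ∑ k ∈ S t, LCB t k ≤ ∑ k ∈ S', LCB t k)
    (i : Fin T → Fin K) (hiS : ∀ t, i t ∈ S t)
    (himin : ∀ t, ∀ k ∈ S t, UCB t (i t) ≤ UCB t k)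
    (v : Fin T → ℝ) (hv : ∀ t, v t ≤ UCB t (i t)) :
    ∑ t, (v t - Lstar kstar)
      ≤ (∑ t ∈ Finset.univ.filter (fun t => kstar ∈ S t),
            (UCB t kstar - LCB t kstar))
        + (1 / (M : ℝ)) * ∑ t, ∑ k ∈ S t, (UCB t k - LCB t k) := by
  have hround t := sub_le_ite_width_add_expect_width (hbracket t kstar).1
    (fun k _ => (hbracket t k).1.trans (hbracket t k).2)
    (fun S' hS' => hSmin t S' (hS'.trans (hScard t))) (hiS t) (himin t) (hv t)
  calc ∑ t, (v t - Lstar kstar)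
      ≤ ∑ t, ((if kstar ∈ S t then UCB t kstar - LCB t kstar else 0)
          + 𝔼 k ∈ S t, (UCB t k - LCB t k)) := sum_le_sum fun t _ => hround t
    _ = _ := by
      rw [sum_add_distrib, sum_filter, mul_sum]
      simp only [expect_eq_sum_div_card, hScard, div_eq_inv_mul, mul_one]

/-- Deterministic core of the pseudo-regret bound for the M-LCB meta-algorithm. -/
theorem mlcb_pseudo_regret_core
    (K M T : ℕ) (hK : 0 < K) (hM : 0 < M) (hT : 0 < T) (hMK : M ≤ K)
    (UCB LCB : Fin T → Fin K → ℝ) (Lstar : Fin K → ℝ)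
    (hbracket : ∀ t k, LCB t k ≤ Lstar k ∧ Lstar k ≤ UCB t k)
    (kstar : Fin K) (hkstar : ∀ k, Lstar kstar ≤ Lstar k)
    (S : Fin T → Finset (Fin K))
    (hScard : ∀ t, (S t).card = M)
    (hSmin : ∀ t, ∀ S' : Finset (Fin K), S'.card = M →
      ∑ k ∈ S t, LCB t k ≤ ∑ k ∈ S', LCB t k)
    (i : Fin T → Fin K) (hiS : ∀ t, i t ∈ S t)
    (himin : ∀ t, ∀ k ∈ S t, UCB t (i t) ≤ UCB t k)
    (v : Fin T → ℝ) (hv : ∀ t, v t ≤ UCB t (i t)) :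
    ∑ t, (v t - Lstar kstar)
      ≤ (∑ t ∈ Finset.univ.filter (fun t => kstar ∈ S t),
            (UCB t kstar - LCB t kstar))
        + (1 / (M : ℝ)) * ∑ t, ∑ k ∈ S t, (UCB t k - LCB t k) :=
  mlcb_pseudo_regret_core_general K M T UCB LCB Lstar hbracket kstar S hScard hSmin i hiS himin v hv
end

section
/- Let K, M, T be positive integers with M ≤ K. For each round t ∈ {1,…,T} and each index k ∈ {1,…,K}, let UCB(t,k) and LCB(t,k) be real numbers, and let L*(k) be real numbers satisfying LCB(t,k) ≤ L*(k) ≤ UCB(t,k) for all t and k. Suppose for each t a subset S_t ⊆ {1,…,K} with |S_t| = M is chosen that minimizes Σ_{k∈S} LCB(t,k) over all subsets S of size M. Let L̄⋆ = min over subsets S ⊆ {1,…,K} with |S| = M of (1/M) Σ_{k∈S} L*(k). Then Σ_{t=1}^T [ (1/M) Σ_{k∈S_t} L*(k) − L̄⋆ ] ≤ (1/M) Σ_{t=1}^T Σ_{k∈S_t} [UCB(t,k) − LCB(t,k)]. -/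
open Finset

theorem sum_sub_sum_le_sum_sub_of_lcb_minimal {ι α : Type*} [AddCommGroup α] [PartialOrder α]
    [IsOrderedAddMonoid α] {s s' : Finset ι} {lcb ucb L : ι → α}
    (hucb : ∀ k ∈ s, L k ≤ ucb k) (hlcb : ∀ k ∈ s', lcb k ≤ L k)
    (hmin : ∑ k ∈ s, lcb k ≤ ∑ k ∈ s', lcb k) :
    ∑ k ∈ s, L k - ∑ k ∈ s', L k ≤ ∑ k ∈ s, (ucb k - lcb k) := by
  have hs : ∑ k ∈ s, L k ≤ ∑ k ∈ s, ucb k := sum_le_sum hucb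
  have hs' : ∑ k ∈ s', lcb k ≤ ∑ k ∈ s', L k := sum_le_sum hlcb
  rw [sum_sub_distrib]
  exact sub_le_sub hs (hmin.trans hs')

theorem mlcb_topM_regret_core_general
    (K M T : ℕ)
    (UCB LCB : Fin T → Fin K → ℝ) (Lstar : Fin K → ℝ)
    (hbracket : ∀ t k, LCB t k ≤ Lstar k ∧ Lstar k ≤ UCB t k)
    (S : Fin T → Finset (Fin K))
    (hSmin : ∀ t, ∀ S' : Finset (Fin K), S'.card = M →
      ∑ k ∈ S t, LCB t k ≤ ∑ k ∈ S', LCB t k)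
    (Lbar : ℝ)
    (hLbar : IsLeast {x : ℝ | ∃ S' : Finset (Fin K), S'.card = M ∧
      x = (1 / (M : ℝ)) * ∑ k ∈ S', Lstar k} Lbar) :
    ∑ t, ((1 / (M : ℝ)) * ∑ k ∈ S t, Lstar k - Lbar)
      ≤ (1 / (M : ℝ)) * ∑ t, ∑ k ∈ S t, (UCB t k - LCB t k) := by
  obtain ⟨⟨Sstar, hSstar_card, hLbar_eq⟩, -⟩ := hLbar
  rw [mul_sum]
  refine sum_le_sum fun t _ => ?_
  rw [hLbar_eq, ← mul_sub]
  refine mul_le_mul_of_nonneg_left ?_ (by positivity)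
  exact sum_sub_sum_le_sum_sub_of_lcb_minimal (fun k _ => (hbracket t k).2)
    (fun k _ => (hbracket t k).1) (hSmin t Sstar hSstar_card)

/-- Deterministic core of the top-M (multiple-play) regret bound for M-LCB. -/
theorem mlcb_topM_regret_core
    (K M T : ℕ) (hK : 0 < K) (hM : 0 < M) (hT : 0 < T) (hMK : M ≤ K)
    (UCB LCB : Fin T → Fin K → ℝ) (Lstar : Fin K → ℝ)
    (hbracket : ∀ t k, LCB t k ≤ Lstar k ∧ Lstar k ≤ UCB t k)
    (S : Fin T → Finset (Fin K))
    (hScard : ∀ t, (S t).card = M)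
    (hSmin : ∀ t, ∀ S' : Finset (Fin K), S'.card = M →
      ∑ k ∈ S t, LCB t k ≤ ∑ k ∈ S', LCB t k)
    (Lbar : ℝ)
    (hLbar : IsLeast {x : ℝ | ∃ S' : Finset (Fin K), S'.card = M ∧
      x = (1 / (M : ℝ)) * ∑ k ∈ S', Lstar k} Lbar) :
    ∑ t, ((1 / (M : ℝ)) * ∑ k ∈ S t, Lstar k - Lbar)
      ≤ (1 / (M : ℝ)) * ∑ t, ∑ k ∈ S t, (UCB t k - LCB t k) :=
  mlcb_topM_regret_core_general K M T UCB LCB Lstar hbracket S hSmin Lbar hLbar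
end

section
/- Let S ≥ 0, U ≥ 0, and x ≥ 1 be real numbers such that |S − U| ≤ √( 2 x (S + 3U + 1) (1 + (1/2) log(S + 3U + 1)) ). Then U ≤ S + (9x/2) ( 6 + log x + log(1 + 4S) ) + √( 2 x (1 + 4S) (1 + (1/2) log(1 + 4S)) ). -/
set_option maxHeartbeats 1000000

open Real

/-- Case A: tangent-line / self-normalization argument when `s` is large. -/
lemma inv_caseA (x s y L Lv R : ℝ) (hx : 1 ≤ x) (hs : 1 ≤ s) (hy : 0 < y)
    (hL : 0 ≤ L) (hLvL : L ≤ Lv)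
    (hlvls : s * (Lv - L) ≤ 3 * y)
    (hR0 : 0 ≤ R) (hR2 : R ^ 2 = x * s * (2 + L)) (hRpos : 0 < R)
    (H : y ^ 2 ≤ x * (s + 3 * y) * (2 + Lv))
    (hA : 3 * x * (3 + L) ≤ R) :
    y ≤ R + 3 * x * (3 + L) := by
  have hx0 : (0:ℝ) < x := by linarith
  have hs0 : (0:ℝ) < s := by linarith
  set κ := x * (3 + L) / (2 * R) with hκdef
  have hκ0 : 0 ≤ κ := by
    rw [hκdef]
    apply div_nonneg (by nlinarith) (by linarith)
  have hhk : 2 * R * κ = x * (3 + L) := by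
    rw [hκdef]; field_simp
  have hk2 : κ ^ 2 * (4 * s * (2 + L)) = x * (3 + L) ^ 2 := by
    rw [hκdef, div_pow]
    rw [show (2 * R) ^ 2 = 4 * R ^ 2 by ring, hR2]
    field_simp
  clear_value κ
  have p1 : x * (s * (Lv - L)) ≤ x * (3 * y) :=
    mul_le_mul_of_nonneg_left hlvls hx0.le
  have p2 : 3 * x * y * (s * (Lv - L)) ≤ 3 * x * y * (3 * y) :=
    mul_le_mul_of_nonneg_left hlvls (by positivity)
  have hk2y : 9 * y ^ 2 * (κ ^ 2 * (4 * s * (2 + L))) = 9 * y ^ 2 * (x * (3 + L) ^ 2) := by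
    rw [hk2]
  have p3 : (9 * x * y ^ 2) * (4 * (2 + L)) ≤ (9 * s * κ ^ 2 * y ^ 2) * (4 * (2 + L)) := by
    nlinarith [hk2y, mul_nonneg (mul_nonneg hx0.le (sq_nonneg y)) (sq_nonneg (1 + L))]
  have p4 : 9 * x * y ^ 2 ≤ 9 * s * κ ^ 2 * y ^ 2 :=
    le_of_mul_le_mul_right p3 (by linarith)
  have p5 : s * (3 * x * y * (Lv - L)) ≤ s * (9 * κ ^ 2 * y ^ 2) := by nlinarith [p2, p4]
  have p6 : 3 * x * y * (Lv - L) ≤ 9 * κ ^ 2 * y ^ 2 :=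
    le_of_mul_le_mul_left p5 hs0
  have hhky : 2 * R * κ * (3 * y) = x * (3 + L) * (3 * y) := by rw [hhk]
  have htan : x * (s + 3 * y) * (2 + Lv) ≤ (R + 3 * κ * y) ^ 2 := by
    nlinarith [p1, p6, hhky, hR2]
  have hrhs0 : 0 ≤ R + 3 * κ * y := by nlinarith [hκ0, hy.le, hR0]
  have hy_le : y ≤ R + 3 * κ * y := by
    calc y = Real.sqrt (y ^ 2) := (Real.sqrt_sq hy.le).symm
      _ ≤ Real.sqrt ((R + 3 * κ * y) ^ 2) := Real.sqrt_le_sqrt (le_trans H htan)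
      _ = R + 3 * κ * y := Real.sqrt_sq hrhs0
  have hκ6 : 6 * κ ≤ 1 := by nlinarith [hhk, hA, hRpos]
  have hy2R : y ≤ 2 * R := by nlinarith [hy_le, mul_le_mul_of_nonneg_right hκ6 hy.le]
  nlinarith [hy_le, mul_le_mul_of_nonneg_left hy2R (by linarith : (0:ℝ) ≤ 3 * κ), hhk]

/-- The cubic polynomial inequality used in case B1. -/
lemma inv_qpoly (L l6 : ℝ) (hL : 0 ≤ L) (hl60 : 0 ≤ l6) (hl6 : l6 ≤ 2.08) :
    9 * (3 + L) ^ 2 * (10 + 6 * l6 + 5 * L)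
      ≤ 6 * (27 + 9/2 * L) * (2 + L) * (3 + L) + (27 + 9/2 * L) ^ 2 * (2 + L) := by
  nlinarith [hl6, hL, hl60, mul_nonneg hL hL, mul_nonneg (mul_nonneg hL hL) hL,
    mul_le_mul_of_nonneg_right hl6 hL,
    mul_le_mul_of_nonneg_right hl6 (mul_nonneg hL hL)]

/-- Case B1: `y` moderate, `s` small. -/
lemma inv_caseB1 (x s y L l6 R : ℝ) (hx : 1 ≤ x) (hs : 1 ≤ s) (hy : 0 < y)
    (hL : 0 ≤ L) (hl60 : 0 ≤ l6) (hl6 : l6 ≤ 2.08)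
    (hR0 : 0 ≤ R) (hR2 : R ^ 2 = x * s * (2 + L))
    (hy2' : y ^ 2 ≤ 6 * x * s * (2 + l6 + L))
    (hB : R ≤ 3 * x * (3 + L)) :
    y ≤ R + x * (27 + 9/2 * L) := by
  have hx0 : (0:ℝ) < x := by linarith
  have hs0 : (0:ℝ) < s := by linarith
  have qpoly := inv_qpoly L l6 hL hl60 hl6
  have k4 := mul_le_mul_of_nonneg_left qpoly (by positivity : (0:ℝ) ≤ x * R)
  have k2' := mul_le_mul_of_nonneg_left hB
    (by nlinarith [sq_nonneg (27 + 9/2 * L), hL, hx0.le] :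
      (0:ℝ) ≤ x * (27 + 9/2 * L) ^ 2 * (2 + L))
  have k1' := mul_le_mul_of_nonneg_right hB
    (by nlinarith [hR0, hl60, hL] : (0:ℝ) ≤ R * (10 + 6 * l6 + 5 * L))
  have k1'' := mul_le_mul_of_nonneg_left k1' (by linarith : (0:ℝ) ≤ 3 * (3 + L))
  have key3 : (3 * (3 + L)) * (R ^ 2 * (10 + 6 * l6 + 5 * L))
      ≤ (3 * (3 + L)) * ((2 + L) * (2 * R * (x * (27 + 9/2 * L)) + (x * (27 + 9/2 * L)) ^ 2)) := by
    nlinarith [k4, k2', k1'']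
  have key : R ^ 2 * (10 + 6 * l6 + 5 * L)
      ≤ (2 + L) * (2 * R * (x * (27 + 9/2 * L)) + (x * (27 + 9/2 * L)) ^ 2) :=
    le_of_mul_le_mul_left key3 (by linarith)
  have hm := mul_le_mul_of_nonneg_left hy2' (by linarith : (0:ℝ) ≤ 2 + L)
  have e : 6 * (2 + l6 + L) * (R ^ 2) = 6 * (2 + l6 + L) * (x * s * (2 + L)) := by
    rw [hR2]
  have goal2 : (2 + L) * (y ^ 2) ≤ (2 + L) * ((R + x * (27 + 9/2 * L)) ^ 2) := by
    nlinarith [hm, e, key]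
  have goal2' : y ^ 2 ≤ (R + x * (27 + 9/2 * L)) ^ 2 :=
    le_of_mul_le_mul_left goal2 (by linarith)
  have hRP0 : 0 ≤ R + x * (27 + 9/2 * L) := by nlinarith [hR0, hL, hx0.le]
  calc y = Real.sqrt (y ^ 2) := (Real.sqrt_sq hy.le).symm
    _ ≤ Real.sqrt ((R + x * (27 + 9/2 * L)) ^ 2) := Real.sqrt_le_sqrt goal2'
    _ = R + x * (27 + 9/2 * L) := Real.sqrt_sq hRP0

/-- Case B2: `y` large compared to `s`. -/
lemma inv_caseB2 (x s y : ℝ) (hx : 1 ≤ x) (hs : 1 ≤ s) (hy : 0 < y)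
    (H : y ^ 2 ≤ x * (s + 3 * y) * (2 + Real.log (s + 3 * y)))
    (hbig : 5 * s < 3 * y) :
    y ≤ 9/2 * x * (1 + 7 * Real.log 2 + Real.log x) := by
  have hx0 : (0:ℝ) < x := by linarith
  have hs0 : (0:ℝ) < s := by linarith
  have hv0 : (0:ℝ) < s + 3 * y := by linarith
  have hLv : 0 ≤ Real.log (s + 3 * y) := Real.log_nonneg (by linarith)
  have hLv36 : Real.log (s + 3 * y) ≤ Real.log (18/5) + Real.log y := by
    have h1 : Real.log (s + 3 * y) ≤ Real.log (18/5 * y) :=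
      Real.log_le_log hv0 (by linarith)
    rwa [Real.log_mul (by norm_num) hy.ne'] at h1
  have hlogy : Real.log y - Real.log (18 * x) ≤ y / (18 * x) - 1 := by
    have h1 : Real.log (y / (18 * x)) ≤ y / (18 * x) - 1 :=
      Real.log_le_sub_one_of_pos (by positivity)
    rwa [Real.log_div hy.ne' (by positivity)] at h1
  have hlog18x : Real.log (18 * x) = Real.log 18 + Real.log x :=
    Real.log_mul (by norm_num) hx0.ne'
  have hlsum : Real.log (18/5) + Real.log 18 ≤ 7 * Real.log 2 := by
    have h1 : Real.log (18/5) + Real.log 18 = Real.log (18/5 * 18) :=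
      (Real.log_mul (by norm_num) (by norm_num)).symm
    have h2 : Real.log (18/5 * 18) ≤ Real.log 128 :=
      Real.log_le_log (by norm_num) (by norm_num)
    have h3 : Real.log 128 = 7 * Real.log 2 := by
      rw [show (128:ℝ) = 2 ^ (7:ℕ) by norm_num, Real.log_pow]; push_cast; ring
    linarith
  have m2 : 2 + Real.log (s + 3 * y)
      ≤ 1 + 7 * Real.log 2 + Real.log x + y / (18 * x) := by
    linarith [hLv36, hlogy, hlog18x, hlsum]
  have m1 : x * (s + 3 * y) * (2 + Real.log (s + 3 * y))
      ≤ x * (18/5 * y) * (2 + Real.log (s + 3 * y)) := by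
    have h0 : (0:ℝ) ≤ x * (2 + Real.log (s + 3 * y)) := by nlinarith [hLv]
    nlinarith [h0]
  have m3 : y ^ 2 ≤ x * (18/5 * y) * (1 + 7 * Real.log 2 + Real.log x + y / (18 * x)) := by
    have h0 : (0:ℝ) ≤ x * (18/5 * y) := by positivity
    nlinarith [H, m1, m2, h0]
  have hcancel : x * (18/5 * y) * (y / (18 * x)) = y ^ 2 / 5 := by
    field_simp
  have m4 : y * (4/5 * y) ≤ y * (18/5 * x * (1 + 7 * Real.log 2 + Real.log x)) := by
    nlinarith [m3, hcancel]
  have h1 := le_of_mul_le_mul_left m4 hy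
  linarith

/-- Main inversion step, in the reduced variables. -/
lemma inv_aux (x s y : ℝ) (hx : 1 ≤ x) (hs : 1 ≤ s) (hy : 0 < y)
    (H : y ^ 2 ≤ x * (s + 3 * y) * (2 + Real.log (s + 3 * y))) :
    y ≤ 9 * x / 2 * (6 + Real.log x + Real.log s)
      + Real.sqrt (x * s * (2 + Real.log s)) := by
  have hx0 : (0:ℝ) < x := by linarith
  have hs0 : (0:ℝ) < s := by linarith
  have hlx : 0 ≤ Real.log x := Real.log_nonneg hx
  have hv1 : (1:ℝ) ≤ s + 3 * y := by linarith
  have hv0 : (0:ℝ) < s + 3 * y := by linarith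
  have hL : 0 ≤ Real.log s := Real.log_nonneg hs
  have hLv : 0 ≤ Real.log (s + 3 * y) := Real.log_nonneg hv1
  have hLvL : Real.log s ≤ Real.log (s + 3 * y) := Real.log_le_log hs0 (by linarith)
  have hlvls : s * (Real.log (s + 3 * y) - Real.log s) ≤ 3 * y := by
    have h1 : Real.log ((s + 3 * y) / s) ≤ (s + 3 * y) / s - 1 :=
      Real.log_le_sub_one_of_pos (by positivity)
    rw [Real.log_div hv0.ne' hs0.ne'] at h1
    have h2 := mul_le_mul_of_nonneg_right h1 hs0.le
    have h3 : (s + 3 * y) / s * s = s + 3 * y := div_mul_cancel₀ _ hs0.ne'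
    nlinarith [h2, h3]
  have hR2 : (Real.sqrt (x * s * (2 + Real.log s))) ^ 2 = x * s * (2 + Real.log s) :=
    Real.sq_sqrt (by nlinarith [hL, mul_pos hx0 hs0])
  have hR0 : 0 ≤ Real.sqrt (x * s * (2 + Real.log s)) := Real.sqrt_nonneg _
  have hl2 : Real.log 2 < 0.6931471808 := Real.log_two_lt_d9
  rcases le_or_gt (3 * y) (5 * s) with hsmall | hbig
  · -- y moderate : v ≤ 6 s
    have hLv6 : Real.log (s + 3 * y) ≤ Real.log 6 + Real.log s := by
      have h1 : Real.log (s + 3 * y) ≤ Real.log (6 * s) :=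
        Real.log_le_log hv0 (by linarith)
      rwa [Real.log_mul (by norm_num) hs0.ne'] at h1
    have hl60 : (0:ℝ) ≤ Real.log 6 := Real.log_nonneg (by norm_num)
    have hl6 : Real.log 6 ≤ 2.08 := by
      have h1 : Real.log 6 ≤ Real.log 8 := Real.log_le_log (by norm_num) (by norm_num)
      have h2 : Real.log 8 = 3 * Real.log 2 := by
        rw [show (8:ℝ) = 2 ^ (3:ℕ) by norm_num, Real.log_pow]; push_cast; ring
      nlinarith [hl2]
    have hy2' : y ^ 2 ≤ 6 * x * s * (2 + Real.log 6 + Real.log s) := by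
      have h0 : (0:ℝ) ≤ x * (2 + Real.log (s + 3 * y)) := by nlinarith [hLv]
      have t1 : x * (s + 3 * y) * (2 + Real.log (s + 3 * y))
          ≤ x * (6 * s) * (2 + Real.log (s + 3 * y)) := by nlinarith [h0]
      have h1 : (0:ℝ) ≤ x * (6 * s) := by positivity
      have t2 : x * (6 * s) * (2 + Real.log (s + 3 * y))
          ≤ x * (6 * s) * (2 + Real.log 6 + Real.log s) := by nlinarith [hLv6, h1]
      nlinarith [H, t1, t2]
    rcases le_or_gt (3 * x * (3 + Real.log s)) (Real.sqrt (x * s * (2 + Real.log s))) with hA | hB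
    · have hRpos : (0:ℝ) < Real.sqrt (x * s * (2 + Real.log s)) := by nlinarith [hL, hA]
      have hfin := inv_caseA x s y (Real.log s) (Real.log (s + 3 * y))
        (Real.sqrt (x * s * (2 + Real.log s))) hx hs hy hL hLvL hlvls hR0 hR2 hRpos H hA
      nlinarith [hfin, mul_nonneg hx0.le hlx, mul_nonneg hx0.le hL, hx]
    · have hfin := inv_caseB1 x s y (Real.log s) (Real.log 6)
        (Real.sqrt (x * s * (2 + Real.log s))) hx hs hy hL hl60 hl6 hR0 hR2 hy2' hB.le
      nlinarith [hfin, mul_nonneg hx0.le hlx]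
  · have hfin := inv_caseB2 x s y hx hs hy H hbig
    have hc : (0:ℝ) ≤ x * (5 - 7 * Real.log 2) := by
      have h1 : (0:ℝ) ≤ 5 - 7 * Real.log 2 := by nlinarith [hl2]
      exact mul_nonneg hx0.le h1
    nlinarith [hfin, hc, mul_nonneg hx0.le hlx, mul_nonneg hx0.le hL, hR0]

/-- Deterministic inversion lemma: a self-normalized bound on `|S - U|`
involving both `S` and `U` is converted into an explicit upper bound on `U`
in terms of `S` alone. -/
theorem self_normalized_inversion
    (S U x : ℝ) (hS : 0 ≤ S) (hU : 0 ≤ U) (hx : 1 ≤ x)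
    (h : |S - U| ≤ Real.sqrt (2 * x * (S + 3 * U + 1)
        * (1 + (1 / 2) * Real.log (S + 3 * U + 1)))) :
    U ≤ S + (9 * x / 2) * (6 + Real.log x + Real.log (1 + 4 * S))
      + Real.sqrt (2 * x * (1 + 4 * S) * (1 + (1 / 2) * Real.log (1 + 4 * S))) := by
  have hx0 : (0:ℝ) < x := by linarith
  have hs1 : (1:ℝ) ≤ 1 + 4 * S := by linarith
  have hL : 0 ≤ Real.log (1 + 4 * S) := Real.log_nonneg hs1
  have hlx : 0 ≤ Real.log x := Real.log_nonneg hx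
  have hsq_goal : Real.sqrt (2 * x * (1 + 4 * S) * (1 + (1 / 2) * Real.log (1 + 4 * S)))
      = Real.sqrt (x * (1 + 4 * S) * (2 + Real.log (1 + 4 * S))) := by
    congr 1
    ring
  rw [hsq_goal]
  have hR0 : 0 ≤ Real.sqrt (x * (1 + 4 * S) * (2 + Real.log (1 + 4 * S))) :=
    Real.sqrt_nonneg _
  rcases le_or_gt U S with hUS | hUS
  · nlinarith [hR0, mul_nonneg hx0.le (by linarith : (0:ℝ) ≤ 6 + Real.log x + Real.log (1 + 4 * S))]
  · have hy : 0 < U - S := by linarith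
    have habs : |S - U| = U - S := by
      rw [abs_sub_comm]
      exact abs_of_pos hy
    rw [habs] at h
    have harg : S + 3 * U + 1 = (1 + 4 * S) + 3 * (U - S) := by ring
    rw [harg] at h
    have hv1 : (1:ℝ) ≤ (1 + 4 * S) + 3 * (U - S) := by linarith
    have hA0 : 0 ≤ x * ((1 + 4 * S) + 3 * (U - S)) * (2 + Real.log ((1 + 4 * S) + 3 * (U - S))) := by
      have h0 := Real.log_nonneg hv1
      exact mul_nonneg (mul_nonneg hx0.le (by linarith)) (by linarith)
    have he : 2 * x * ((1 + 4 * S) + 3 * (U - S))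
          * (1 + 1 / 2 * Real.log ((1 + 4 * S) + 3 * (U - S)))
        = x * ((1 + 4 * S) + 3 * (U - S)) * (2 + Real.log ((1 + 4 * S) + 3 * (U - S))) := by
      ring
    rw [he] at h
    have H : (U - S) ^ 2 ≤ x * ((1 + 4 * S) + 3 * (U - S))
        * (2 + Real.log ((1 + 4 * S) + 3 * (U - S))) := by
      nlinarith [mul_self_le_mul_self hy.le h, Real.sq_sqrt hA0,
        Real.sqrt_nonneg (x * ((1 + 4 * S) + 3 * (U - S))
          * (2 + Real.log ((1 + 4 * S) + 3 * (U - S))))]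
    have hfin := inv_aux x (1 + 4 * S) (U - S) hx hs1 hy H
    linarith
end

section
/- Let Q, P_1, …, P_K be probability measures on a measurable space, and let A_1, …, A_K be pairwise disjoint measurable sets. Then (1/K) Σ_{h=1}^K P_h(A_h) ≤ 1/K + √( (1/(2K)) Σ_{h=1}^K KL(Q ‖ P_h) ). -/
open MeasureTheory ENNReal
open scoped Classical

/-- Kullback–Leibler divergence between measures: `∫ log(dμ/dν) dμ` when
`μ ≪ ν` and the log-likelihood ratio is `μ`-integrable, and `∞` otherwise. -/
noncomputable def klDiv {Ω : Type*} [MeasurableSpace Ω] (μ ν : Measure Ω) : ℝ≥0∞ :=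
  if μ ≪ ν ∧ Integrable (llr μ ν) μ then ENNReal.ofReal (∫ ω, llr μ ν ω ∂μ) else ⊤

/-!
Pinsker's inequality `P(A) - Q(A) ≤ √(KL(Q ‖ P) / 2)` comes from the elementary inequality
`3 (x - 1)² ≤ 2 (x + 2) (x log x - x + 1)` at `x = dQ/dP`: by AM–GM it gives
`∫ |dQ/dP - 1| dP ≤ t + KL(Q ‖ P) / (2t)` for every `t > 0`, whose left side is at least
`2 (P(A) - Q(A))`; then optimise over `t`. Summing over `h`, disjointness gives
`∑ Q(A_h) ≤ 1`, and the power mean inequality bounds the mean of the `√(KL(Q ‖ P_h) / 2)` by the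
square root of their mean.
-/

open Set
open InformationTheory (klFun klFun_one klFun_apply klFun_nonneg hasDerivAt_klFun)

lemma three_mul_sq_sub_one_le_klFun {x : ℝ} (hx : 0 ≤ x) :
    3 * (x - 1) ^ 2 ≤ 2 * (x + 2) * klFun x := by
  set g : ℝ → ℝ := fun x ↦ 2 * (x + 2) * klFun x - 3 * (x - 1) ^ 2
  set g' : ℝ → ℝ := fun x ↦ 4 * ((x + 1) * Real.log x - 2 * (x - 1))
  have hg_deriv : ∀ y : ℝ, y ≠ 0 → HasDerivAt g (g' y) y := fun y hy ↦
    ((((hasDerivAt_id y).add_const 2).const_mul 2).mul (hasDerivAt_klFun hy)).sub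
      ((((hasDerivAt_id y).sub_const 1).pow 2).const_mul 3) |>.congr_deriv
      (by simp only [g', klFun_apply, id]; ring)
  have hg'_deriv : ∀ y : ℝ, y ≠ 0 → HasDerivAt g' (4 * (Real.log y + y⁻¹ - 1)) y := fun y hy ↦
    ((((hasDerivAt_id y).add_const 1).mul (Real.hasDerivAt_log hy)).sub
      (((hasDerivAt_id y).sub_const 1).const_mul 2)).const_mul 4 |>.congr_deriv
      (by field_simp; simp only [id]; ring)
  have hconvex : ConvexOn ℝ (Ici 0) g := by
    refine convexOn_of_hasDerivWithinAt2_nonneg (f' := g')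
      (f'' := fun y ↦ 4 * (Real.log y + y⁻¹ - 1)) (convex_Ici 0) (by simp only [g]; fun_prop)
      ?_ ?_ ?_ <;> rw [interior_Ici] <;> intro y (hy : 0 < y)
    · exact (hg_deriv y hy.ne').hasDerivWithinAt
    · exact (hg'_deriv y hy.ne').hasDerivWithinAt
    · linarith [Real.one_sub_inv_le_log_of_pos hy]
  have hmin : IsMinOn g (Ici 0) 1 := by
    refine hconvex.isMinOn_of_rightDeriv_eq_zero (by simp) ?_
    rw [(hg_deriv 1 one_ne_zero).hasDerivWithinAt.derivWithin (uniqueDiffWithinAt_Ioi 1)]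
    simp [g']
  simpa [g, klFun_one] using hmin hx

lemma abs_sub_one_le_add_klFun_div {x t : ℝ} (hx : 0 ≤ x) (ht : 0 < t) :
    |x - 1| ≤ t * (x + 2) / 3 + klFun x / (2 * t) := by
  have hk := three_mul_sq_sub_one_le_klFun hx
  have hk0 := klFun_nonneg hx
  have hprod : 4 * (t * (x + 2) / 3) * (klFun x / (2 * t)) = 2 * (x + 2) * klFun x / 3 := by
    field_simp
    ring
  refine abs_le_of_sq_le_sq ?_ (by positivity)
  nlinarith [sq_nonneg (t * (x + 2) / 3 - klFun x / (2 * t))]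

lemma le_sqrt_div_two_of_forall_two_mul_le {a b : ℝ} (hb : 0 ≤ b)
    (h : ∀ t > 0, 2 * a ≤ t + b / (2 * t)) : a ≤ √(b / 2) := by
  rcases hb.eq_or_lt with rfl | hb
  · refine le_of_forall_pos_le_add fun ε hε ↦ ?_
    have := h (2 * ε) (by positivity)
    simp only [zero_div, add_zero, Real.sqrt_zero, zero_add] at this ⊢
    linarith
  · have hs : 0 < √(b / 2) := by positivity
    have hs2 : √(b / 2) ^ 2 = b / 2 := Real.sq_sqrt (by positivity)
    have : b / (2 * √(b / 2)) = √(b / 2) := by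
      rw [div_eq_iff (by positivity)]
      nlinarith
    linarith [h (√(b / 2)) hs]

lemma integral_abs_sub_one_le_add_integral_klFun_div {Ω : Type*} [MeasurableSpace Ω]
    {ν : Measure Ω} [IsProbabilityMeasure ν] {f : Ω → ℝ} (hf : 0 ≤ f) (hf_int : Integrable f ν)
    (hf_one : ∫ ω, f ω ∂ν = 1) (hkl : Integrable (fun ω ↦ klFun (f ω)) ν) {t : ℝ} (ht : 0 < t) :
    ∫ ω, |f ω - 1| ∂ν ≤ t + (∫ ω, klFun (f ω) ∂ν) / (2 * t) := by
  have hlin : Integrable (fun ω ↦ t * (f ω + 2) / 3) ν :=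
    ((hf_int.add (integrable_const 2)).const_mul t).div_const 3
  calc ∫ ω, |f ω - 1| ∂ν
      ≤ ∫ ω, (t * (f ω + 2) / 3 + klFun (f ω) / (2 * t)) ∂ν :=
        integral_mono (hf_int.sub (integrable_const 1)).abs (hlin.add (hkl.div_const _))
          fun ω ↦ abs_sub_one_le_add_klFun_div (hf ω) ht
    _ = t + (∫ ω, klFun (f ω) ∂ν) / (2 * t) := by
        rw [integral_add hlin (hkl.div_const _), integral_div, integral_div, integral_const_mul,
          integral_add hf_int (integrable_const 2), hf_one]
        simp only [integral_const, probReal_univ, smul_eq_mul, one_mul]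
        ring

section Pinsker

variable {Ω : Type*} [MeasurableSpace Ω] {μ ν : Measure Ω} [IsProbabilityMeasure μ]
  [IsProbabilityMeasure ν] {A : Set Ω}

lemma two_mul_measureReal_sub_le_integral_abs_rnDeriv (hμν : μ ≪ ν) (hA : MeasurableSet A) :
    2 * (ν.real A - μ.real A) ≤ ∫ ω, |(μ.rnDeriv ν ω).toReal - 1| ∂ν := by
  set f : Ω → ℝ := fun ω ↦ (μ.rnDeriv ν ω).toReal
  have hf : Integrable f ν := Measure.integrable_toReal_rnDeriv
  have hle : Integrable (fun ω ↦ 1 - f ω) ν := (integrable_const 1).sub hf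
  have hge : Integrable (fun ω ↦ f ω - 1) ν := hf.sub (integrable_const 1)
  have hsplit : ∫ ω, A.piecewise (fun ω ↦ 1 - f ω) (fun ω ↦ f ω - 1) ω ∂ν
      = 2 * (ν.real A - μ.real A) := by
    rw [integral_piecewise hA hle.integrableOn hge.integrableOn,
      integral_sub (integrable_const 1) hf.integrableOn,
      integral_sub hf.integrableOn (integrable_const 1),
      Measure.setIntegral_toReal_rnDeriv hμν, Measure.setIntegral_toReal_rnDeriv hμν]
    simp only [integral_const, measureReal_restrict_apply MeasurableSet.univ, univ_inter,
      smul_eq_mul, mul_one, probReal_compl_eq_one_sub hA]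
    ring
  rw [← hsplit]
  refine integral_mono (Integrable.piecewise hA hle.integrableOn hge.integrableOn) hge.abs
    fun ω ↦ ?_
  by_cases hω : ω ∈ A
  · simpa [hω, abs_sub_comm] using le_abs_self (1 - f ω)
  · simpa [hω] using le_abs_self (f ω - 1)

lemma measureReal_sub_le_sqrt_toReal_klDiv (h : InformationTheory.klDiv μ ν ≠ ∞)
    (hA : MeasurableSet A) :
    ν.real A - μ.real A ≤ √((InformationTheory.klDiv μ ν).toReal / 2) := by
  obtain ⟨hμν, hllr⟩ := InformationTheory.klDiv_ne_top_iff.mp h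
  rw [InformationTheory.toReal_klDiv_eq_integral_klFun hμν]
  refine le_sqrt_div_two_of_forall_two_mul_le
    (integral_nonneg fun _ ↦ klFun_nonneg ENNReal.toReal_nonneg) fun t ht ↦ ?_
  refine (two_mul_measureReal_sub_le_integral_abs_rnDeriv hμν hA).trans ?_
  exact integral_abs_sub_one_le_add_integral_klFun_div (fun _ ↦ ENNReal.toReal_nonneg)
    Measure.integrable_toReal_rnDeriv (by simp [Measure.integral_toReal_rnDeriv hμν])
    ((InformationTheory.integrable_klFun_rnDeriv_iff hμν).mpr hllr) ht

lemma measure_le_add_rpow_klDiv (hA : MeasurableSet A) :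
    ν A ≤ μ A + (InformationTheory.klDiv μ ν / 2) ^ (1 / 2 : ℝ) := by
  by_cases h : InformationTheory.klDiv μ ν = ∞
  · simp [h, ENNReal.top_div]
  rw [← ENNReal.toReal_le_toReal (measure_ne_top ν A) (by finiteness), ENNReal.toReal_add
    (measure_ne_top μ A) (by finiteness), ← ENNReal.toReal_rpow, ENNReal.toReal_div,
    ← Real.sqrt_eq_rpow]
  exact sub_le_iff_le_add'.mp (measureReal_sub_le_sqrt_toReal_klDiv h hA)

end Pinsker

/-- Mathlib's `InformationTheory.klDiv` adds `ν univ - μ univ` to the integral of `llr μ ν`. -/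
lemma klDiv_eq_informationTheory_klDiv {Ω : Type*} [MeasurableSpace Ω] {μ ν : Measure Ω}
    (h : μ univ = ν univ) : klDiv μ ν = InformationTheory.klDiv μ ν := by
  unfold klDiv
  split_ifs with hc
  · rw [InformationTheory.klDiv_of_ac_of_integrable hc.1 hc.2, measureReal_def, measureReal_def, h,
      add_sub_cancel_right]
  · exact (InformationTheory.klDiv_eq_top_iff.mpr fun h₁ h₂ ↦ hc ⟨h₁, h₂⟩).symm

open Finset in
lemma ENNReal.sum_rpow_half_div_card_le {ι : Type*} (s : Finset ι) (x : ι → ℝ≥0∞) :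
    (∑ i ∈ s, x i ^ (1 / 2 : ℝ)) / #s ≤ ((∑ i ∈ s, x i) / #s) ^ (1 / 2 : ℝ) := by
  rcases s.eq_empty_or_nonempty with rfl | hs
  · simp
  have hcard : (#s : ℝ≥0∞) ≠ 0 := by simpa using hs.ne_empty
  have hw : ∑ _i ∈ s, (#s : ℝ≥0∞)⁻¹ = 1 := by
    rw [sum_const, nsmul_eq_mul, ENNReal.mul_inv_cancel hcard (natCast_ne_top _)]
  have hmean := ENNReal.rpow_arith_mean_le_arith_mean_rpow s (fun _ ↦ (#s : ℝ≥0∞)⁻¹)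
    (fun i ↦ x i ^ (1 / 2 : ℝ)) hw one_le_two
  simp only [← ENNReal.rpow_mul, one_div, inv_mul_cancel₀ (two_ne_zero (α := ℝ)), ENNReal.rpow_one,
    ← mul_sum] at hmean
  rw [ENNReal.div_eq_inv_mul, ENNReal.div_eq_inv_mul, one_div]
  exact (ENNReal.le_rpow_inv_iff two_pos).mpr hmean

open Finset in
theorem identification_term_bound_general
    {Ω : Type*} [MeasurableSpace Ω] (K : ℕ)
    (Q : Measure Ω) [IsProbabilityMeasure Q]
    (P : Fin K → Measure Ω) [∀ h, IsProbabilityMeasure (P h)]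
    (A : Fin K → Set Ω) (hAmeas : ∀ h, MeasurableSet (A h))
    (hdisj : Pairwise (Function.onFun Disjoint A)) :
    (∑ h, P h (A h)) / (K : ℝ≥0∞)
      ≤ 1 / (K : ℝ≥0∞)
        + ((∑ h, klDiv Q (P h)) / (2 * (K : ℝ≥0∞))) ^ ((1 : ℝ) / 2) := by
  have hQ : ∑ h, Q (A h) ≤ 1 :=
    (sum_measure_le_measure_univ (fun h _ ↦ (hAmeas h).nullMeasurableSet)
      fun _ _ _ _ hij ↦ (hdisj hij).aedisjoint).trans_eq measure_univ
  have hpinsker (h : Fin K) : P h (A h) ≤ Q (A h) + (klDiv Q (P h) / 2) ^ ((1 : ℝ) / 2) := by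
    rw [klDiv_eq_informationTheory_klDiv (by simp)]
    exact measure_le_add_rpow_klDiv (hAmeas h)
  have hmean := ENNReal.sum_rpow_half_div_card_le univ fun h ↦ klDiv Q (P h) / 2
  have hsum : (∑ h, klDiv Q (P h) / 2) / K = (∑ h, klDiv Q (P h)) / (2 * K) := by
    simp only [div_eq_mul_inv, ← sum_mul, mul_assoc,
      ENNReal.mul_inv (Or.inl two_ne_zero) (Or.inl ENNReal.ofNat_ne_top)]
  rw [card_univ, Fintype.card_fin, hsum] at hmean
  calc (∑ h, P h (A h)) / K
      ≤ (∑ h, Q (A h) + ∑ h, (klDiv Q (P h) / 2) ^ ((1 : ℝ) / 2)) / K := by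
        rw [← sum_add_distrib]
        gcongr with h
        exact hpinsker h
    _ ≤ 1 / K + ((∑ h, klDiv Q (P h)) / (2 * K)) ^ ((1 : ℝ) / 2) := by
        rw [ENNReal.add_div]
        gcongr

/-- Identification-term bound in the minimax lower-bound proof, via
Pinsker's inequality and concavity of the square root. -/
theorem identification_term_bound
    {Ω : Type*} [MeasurableSpace Ω] (K : ℕ) (hK : 0 < K)
    (Q : Measure Ω) [IsProbabilityMeasure Q]
    (P : Fin K → Measure Ω) [∀ h, IsProbabilityMeasure (P h)]
    (A : Fin K → Set Ω) (hAmeas : ∀ h, MeasurableSet (A h))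
    (hdisj : Pairwise (Function.onFun Disjoint A)) :
    (∑ h, P h (A h)) / (K : ℝ≥0∞)
      ≤ 1 / (K : ℝ≥0∞)
        + ((∑ h, klDiv Q (P h)) / (2 * (K : ℝ≥0∞))) ^ ((1 : ℝ) / 2) :=
  identification_term_bound_general K Q P A hAmeas hdisj
end

section
/- Let K, M, T be positive integers, β ∈ (0,1], α = 1/(1+β), δ ∈ [0,1], and let c_β > 0 and c₀ > 0 satisfy c_β · c₀^{(1+β)/(2β)} ≤ 1/2. Set Δ = c₀ ( (1+δ) M T / K )^{−β/(1+β)}. Let n_1, …, n_K be nonnegative reals with Σ_{h=1}^K n_h = MT and n_h ≤ (1+δ) MT/K for every h, and let r_1, …, r_K be reals satisfying r_h ≥ n_h Δ ( 1 − c_β √( n_h Δ^{(1+β)/β} ) ) for every h. Then (1/M) Σ_{h=1}^K r_h ≥ (1/2) T Δ = (c₀/2) (1+δ)^{−(1−α)} (K/M)^{1−α} T^{α}. -/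
/-- Arithmetic core of the internal-regret lower bound under the concentration
event: `n h` is the number of updates of expert `h` and `r h` its internal
regret, which satisfies the heavy-tailed bandit lower bound with gap `Δ`. -/
theorem internal_regret_lower_bound_core
    (K M T : ℕ) (hK : 0 < K) (hM : 0 < M) (hT : 0 < T)
    (β : ℝ) (hβ : β ∈ Set.Ioc (0 : ℝ) 1)
    (α : ℝ) (hα : α = 1 / (1 + β))
    (δ : ℝ) (hδ : δ ∈ Set.Icc (0 : ℝ) 1)
    (cβ c₀ : ℝ) (hcβ : 0 < cβ) (hc₀ : 0 < c₀)
    (hsmall : cβ * c₀ ^ ((1 + β) / (2 * β)) ≤ 1 / 2)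
    (Δ : ℝ) (hΔ : Δ = c₀ * ((1 + δ) * M * T / K) ^ (-(β / (1 + β))))
    (n : Fin K → ℝ) (hn0 : ∀ h, 0 ≤ n h)
    (hnsum : ∑ h, n h = (M : ℝ) * T)
    (hnub : ∀ h, n h ≤ (1 + δ) * M * T / K)
    (r : Fin K → ℝ)
    (hr : ∀ h, n h * Δ * (1 - cβ * Real.sqrt (n h * Δ ^ ((1 + β) / β))) ≤ r h) :
    (1 / 2) * T * Δ ≤ (1 / (M : ℝ)) * ∑ h, r h ∧
      (1 / 2) * T * Δ
        = (c₀ / 2) * (1 + δ) ^ (-(1 - α)) * ((K : ℝ) / M) ^ (1 - α) * (T : ℝ) ^ α := by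
  obtain ⟨hβ0, hβ1⟩ := hβ
  obtain ⟨hδ0, hδ1⟩ := hδ
  have hβ' : (0:ℝ) < 1 + β := by linarith
  have hM' : (0:ℝ) < M := by exact_mod_cast hM
  have hT' : (0:ℝ) < T := by exact_mod_cast hT
  have hK' : (0:ℝ) < K := by exact_mod_cast hK
  have h1δ : (0:ℝ) < 1 + δ := by linarith
  have hNpos : (0:ℝ) < (1 + δ) * M * T / K := by positivity
  set N : ℝ := (1 + δ) * M * T / K with hNdef
  have hΔpos : 0 < Δ := by rw [hΔ]; positivity
  -- Δ ^ ((1+β)/β) = c₀^((1+β)/β) * N⁻¹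
  have hexp : Δ ^ ((1 + β) / β) = c₀ ^ ((1 + β) / β) * N⁻¹ := by
    rw [hΔ, Real.mul_rpow hc₀.le (Real.rpow_nonneg hNpos.le _),
      ← Real.rpow_mul hNpos.le]
    congr 1
    have hne : -(β / (1 + β)) * ((1 + β) / β) = -1 := by field_simp
    rw [hne, Real.rpow_neg_one]
  have hkey : ∀ h, cβ * Real.sqrt (n h * Δ ^ ((1 + β) / β)) ≤ 1 / 2 := by
    intro h
    have h1 : n h * Δ ^ ((1 + β) / β) ≤ c₀ ^ ((1 + β) / β) := by
      rw [hexp]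
      calc n h * (c₀ ^ ((1 + β) / β) * N⁻¹)
          ≤ N * (c₀ ^ ((1 + β) / β) * N⁻¹) := by
            apply mul_le_mul_of_nonneg_right (hnub h)
            positivity
        _ = c₀ ^ ((1 + β) / β) := by
            rw [mul_comm (c₀ ^ ((1 + β) / β)) N⁻¹, ← mul_assoc,
              mul_inv_cancel₀ hNpos.ne', one_mul]
    have h2 : Real.sqrt (n h * Δ ^ ((1 + β) / β)) ≤ c₀ ^ ((1 + β) / (2 * β)) := by
      calc Real.sqrt (n h * Δ ^ ((1 + β) / β))
          ≤ Real.sqrt (c₀ ^ ((1 + β) / β)) := Real.sqrt_le_sqrt h1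
        _ = c₀ ^ ((1 + β) / (2 * β)) := by
            rw [Real.sqrt_eq_rpow, ← Real.rpow_mul hc₀.le]
            congr 1
            field_simp
    calc cβ * Real.sqrt (n h * Δ ^ ((1 + β) / β))
        ≤ cβ * c₀ ^ ((1 + β) / (2 * β)) := by
          exact mul_le_mul_of_nonneg_left h2 hcβ.le
      _ ≤ 1 / 2 := hsmall
  have hr' : ∀ h, n h * Δ * (1 / 2) ≤ r h := by
    intro h
    refine le_trans ?_ (hr h)
    apply mul_le_mul_of_nonneg_left _ (mul_nonneg (hn0 h) hΔpos.le)
    linarith [hkey h]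
  have hsumge : (M : ℝ) * T * Δ * (1 / 2) ≤ ∑ h, r h := by
    calc (M : ℝ) * T * Δ * (1 / 2) = ∑ h, n h * Δ * (1 / 2) := by
          rw [← Finset.sum_mul, ← Finset.sum_mul, hnsum]
      _ ≤ ∑ h, r h := Finset.sum_le_sum fun h _ => hr' h
  constructor
  · have := mul_le_mul_of_nonneg_left hsumge (by positivity : (0:ℝ) ≤ 1 / M)
    calc (1 / 2) * T * Δ = (1 / M) * ((M : ℝ) * T * Δ * (1 / 2)) := by
          field_simp
      _ ≤ (1 / M) * ∑ h, r h := this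
  · have he : 1 - α = β / (1 + β) := by rw [hα]; field_simp; ring
    rw [hΔ, ← he]
    have hrw : N ^ (-(1 - α)) =
        (1 + δ) ^ (-(1 - α)) * ((K : ℝ) / M) ^ (1 - α) * (T : ℝ) ^ (-(1 - α)) := by
      rw [hNdef]
      rw [Real.div_rpow (by positivity) hK'.le, Real.mul_rpow (by positivity) hT'.le,
        Real.mul_rpow h1δ.le hM'.le,
        Real.div_rpow hK'.le hM'.le]
      rw [Real.rpow_neg h1δ.le, Real.rpow_neg hM'.le, Real.rpow_neg hT'.le,
        Real.rpow_neg hK'.le]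
      have h1 : (1 + δ) ^ (1 - α) ≠ 0 := by positivity
      have h2 : (M : ℝ) ^ (1 - α) ≠ 0 := by positivity
      have h3 : (T : ℝ) ^ (1 - α) ≠ 0 := by positivity
      have h4 : (K : ℝ) ^ (1 - α) ≠ 0 := by positivity
      field_simp
    have hT2 : (T : ℝ) * (T : ℝ) ^ (-(1 - α)) = (T : ℝ) ^ α := by
      nth_rewrite 1 [← Real.rpow_one (T : ℝ)]
      rw [← Real.rpow_add hT']
      congr 1; ring
    rw [hrw]
    rw [← hT2]
    ring
end
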